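/- Let X ∈ ℝ^{n×p} and let Y = XB + W, where B ∈ ℝ^{p×L} satisfies B[i,:] = 0 for all i ∉ S for an index set S ⊆ {1,…,p}, and W ∈ ℝ^{n×L}. Suppose the minimum eigenvalue of X[:,S]ᵀX[:,S] is at least c > 0, let B_min = min_{i∈S} ‖B[i,:]‖₂, and let S' ⊊ S be a proper subset. If for some Γ > 0 the noise satisfies ‖W‖_F < (Γ/(1+Γ))·√c·B_min, then ‖(Iₙ − P(S))Y‖_F / ‖(Iₙ − P(S'))Y‖_F < Γ. -/

import Mathlib

open Matrix

/-- The squared Frobenius norm of a real matrix. -/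
noncomputable def frobSq {n L : ℕ} (A : Matrix (Fin n) (Fin L) ℝ) : ℝ :=
  ∑ i, ∑ j, A i j ^ 2

/-- The Frobenius norm of a real matrix. -/
noncomputable def frob {n L : ℕ} (A : Matrix (Fin n) (Fin L) ℝ) : ℝ :=
  Real.sqrt (frobSq A)

/-- The span of the columns of `X` indexed by the index set `S`. -/
def colSpan {n p : ℕ} (X : Matrix (Fin n) (Fin p) ℝ) (S : Finset (Fin p)) :
    Submodule ℝ (Fin n → ℝ) :=
  Submodule.span ℝ ((fun j => fun i => X i j) '' (S : Set (Fin p)))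

/-- `P` is the orthogonal projection matrix onto the subspace `V` of `ℝⁿ`. -/
def IsOrthProjOnto {n : ℕ} (P : Matrix (Fin n) (Fin n) ℝ)
    (V : Submodule ℝ (Fin n → ℝ)) : Prop :=
  P * P = P ∧ Pᵀ = P ∧ LinearMap.range P.mulVecLin = V

/-- The minimum Euclidean row norm `min_{i ∈ S} ‖B[i,:]‖₂` of the rows of `B` indexed
by `S`. -/
noncomputable def minRowNorm {p L : ℕ} (B : Matrix (Fin p) (Fin L) ℝ)
    (S : Finset (Fin p)) : ℝ :=
  sInf ((fun i => Real.sqrt (∑ j, B i j ^ 2)) '' (S : Set (Fin p)))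

/-!
The signal `XB` has its columns in `colSpan X S`, so `(1 - P(S)) Y = (1 - P(S)) W` and the
numerator is at most `‖W‖_F`. For the denominator pick `i₀ ∈ S \ S'`: the `j`-th column of
`(1 - P(S')) XB` is `X (b - a)`, where `b = B[:,j]` and `X a = P(S') X b` with `a` supported on
`S'`; thus `b - a` is supported on `S` and `(b - a) i₀ = B i₀ j`, and the eigenvalue bound gives
`‖(1 - P(S')) XB‖_F ≥ √c ‖B[i₀,:]‖₂ ≥ √c B_min`. The triangle inequality then bounds the
denominator below by `√c B_min - ‖W‖_F`, and the noise condition is exactly what makes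
`‖W‖_F / (√c B_min - ‖W‖_F) < Γ`.
-/

section Frobenius

open scoped Matrix.Norms.Frobenius

variable {n L : ℕ}

lemma frob_eq_norm (A : Matrix (Fin n) (Fin L) ℝ) : frob A = ‖A‖ := by
  rw [frobenius_norm_def, frob, frobSq, Real.sqrt_eq_rpow]
  simp only [Real.norm_eq_abs, Real.rpow_two, sq_abs]

lemma frob_sub_frob_le_frob_add (A C : Matrix (Fin n) (Fin L) ℝ) :
    frob A - frob C ≤ frob (A + C) := by
  simpa only [frob_eq_norm, norm_neg, sub_neg_eq_add] using norm_sub_norm_le A (-C)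

lemma frobSq_eq_trace (A : Matrix (Fin n) (Fin L) ℝ) : frobSq A = trace (Aᵀ * A) := by
  rw [frobSq, Finset.sum_comm]
  simp only [trace, diag, mul_apply, transpose_apply, sq]

lemma frobSq_nonneg (A : Matrix (Fin n) (Fin L) ℝ) : 0 ≤ frobSq A :=
  Finset.sum_nonneg fun _ _ => Finset.sum_nonneg fun _ _ => sq_nonneg _

end Frobenius

section Projection

variable {n L : ℕ} {P : Matrix (Fin n) (Fin n) ℝ}

lemma frobSq_mul_add_frobSq_one_sub_mul (hP : P * P = P) (hPt : Pᵀ = P)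
    (M : Matrix (Fin n) (Fin L) ℝ) : frobSq (P * M) + frobSq ((1 - P) * M) = frobSq M := by
  have hPP : Pᵀ * P = P := by rw [hPt, hP]
  have hQQ : (1 - P)ᵀ * (1 - P) = 1 - P := by
    rw [transpose_sub, transpose_one, hPt, Matrix.sub_mul, Matrix.mul_sub, Matrix.mul_sub, hP,
      Matrix.one_mul, Matrix.one_mul, Matrix.mul_one, sub_self, sub_zero]
  rw [frobSq_eq_trace, frobSq_eq_trace, frobSq_eq_trace, ← trace_add, transpose_mul,
    transpose_mul, Matrix.mul_assoc, ← Matrix.mul_assoc Pᵀ, hPP, Matrix.mul_assoc,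
    ← Matrix.mul_assoc (1 - P)ᵀ, hQQ, ← Matrix.mul_add, ← Matrix.add_mul, add_sub_cancel,
    Matrix.one_mul]

lemma frob_one_sub_mul_le (hP : P * P = P) (hPt : Pᵀ = P) (M : Matrix (Fin n) (Fin L) ℝ) :
    frob ((1 - P) * M) ≤ frob M := by
  refine Real.sqrt_le_sqrt ?_
  linarith [frobSq_mul_add_frobSq_one_sub_mul hP hPt M, frobSq_nonneg (P * M)]

lemma mulVec_eq_self_of_mem_range (hP : P * P = P) {v : Fin n → ℝ}
    (hv : v ∈ LinearMap.range P.mulVecLin) : P *ᵥ v = v := by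
  obtain ⟨w, rfl⟩ := hv
  rw [mulVecLin_apply, mulVec_mulVec, hP]

end Projection

section ColSpan

variable {n p L : ℕ} {X : Matrix (Fin n) (Fin p) ℝ} {S : Finset (Fin p)}

lemma mem_colSpan_iff {u : Fin n → ℝ} :
    u ∈ colSpan X S ↔ ∃ a : Fin p → ℝ, (∀ i ∉ S, a i = 0) ∧ X *ᵥ a = u := by
  constructor
  · intro hu
    induction hu using Submodule.span_induction with
    | mem x hx =>
      obtain ⟨j, hj, rfl⟩ := hx
      refine ⟨Pi.single j 1, fun i hi => Pi.single_eq_of_ne (ne_of_mem_of_not_mem hj hi).symm 1, ?_⟩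
      rw [mulVec_single_one]
      rfl
    | zero => exact ⟨0, fun _ _ => rfl, mulVec_zero X⟩
    | add x y _ _ hx hy =>
      obtain ⟨a, ha, rfl⟩ := hx
      obtain ⟨b, hb, rfl⟩ := hy
      exact ⟨a + b, fun i hi => by simp [ha i hi, hb i hi], mulVec_add X a b⟩
    | smul r x _ hx =>
      obtain ⟨a, ha, rfl⟩ := hx
      exact ⟨r • a, fun i hi => by simp [ha i hi], mulVec_smul X r a⟩
  · rintro ⟨a, ha, rfl⟩
    rw [mulVec_eq_sum]
    refine Submodule.sum_mem _ fun j _ => ?_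
    by_cases hj : j ∈ S
    · rw [op_smul_eq_smul]
      exact Submodule.smul_mem _ _ (Submodule.subset_span ⟨j, hj, rfl⟩)
    · simp [ha j hj]

lemma one_sub_mul_mul_eq_zero {P : Matrix (Fin n) (Fin n) ℝ} (hP : P * P = P)
    (hPr : LinearMap.range P.mulVecLin = colSpan X S) {B : Matrix (Fin p) (Fin L) ℝ}
    (hB : ∀ i ∉ S, ∀ j, B i j = 0) : (1 - P) * (X * B) = 0 := by
  have hPXB : P * (X * B) = X * B := by
    refine transpose_injective (funext fun j => ?_)
    refine mulVec_eq_self_of_mem_range hP (hPr ▸ mem_colSpan_iff.2 ⟨Bᵀ j, ?_, rfl⟩)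
    exact fun i hi => hB i hi j
  rw [Matrix.sub_mul, hPXB, Matrix.one_mul, sub_self]

end ColSpan

section Denominator

variable {n p L : ℕ} {X : Matrix (Fin n) (Fin p) ℝ} {S S' : Finset (Fin p)} {c : ℝ}
  {P : Matrix (Fin n) (Fin n) ℝ}

lemma mul_sq_le_sum_sq_one_sub_mulVec (hc : 0 ≤ c)
    (hmineig : ∀ b : Fin p → ℝ, (∀ i ∉ S, b i = 0) → c * ∑ i, b i ^ 2 ≤ ∑ i, (X *ᵥ b) i ^ 2)
    (hS' : S' ⊆ S) (hPr : LinearMap.range P.mulVecLin = colSpan X S') {b : Fin p → ℝ}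
    (hb : ∀ i ∉ S, b i = 0) {i₀ : Fin p} (hi₀ : i₀ ∉ S') :
    c * b i₀ ^ 2 ≤ ∑ i, ((1 - P) *ᵥ (X *ᵥ b)) i ^ 2 := by
  obtain ⟨a, ha, hXa⟩ := mem_colSpan_iff.1 (hPr ▸ LinearMap.mem_range_self P.mulVecLin (X *ᵥ b))
  have hres : (1 - P) *ᵥ (X *ᵥ b) = X *ᵥ (b - a) := by
    rw [sub_mulVec, one_mulVec, mulVec_sub, hXa, mulVecLin_apply]
  have hsupp : ∀ i ∉ S, (b - a) i = 0 := fun i hi => by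
    simp [hb i hi, ha i fun h => hi (hS' h)]
  calc c * b i₀ ^ 2 = c * (b - a) i₀ ^ 2 := by simp [ha i₀ hi₀]
    _ ≤ c * ∑ i, (b - a) i ^ 2 :=
      mul_le_mul_of_nonneg_left
        (Finset.single_le_sum (f := fun i => (b - a) i ^ 2) (fun _ _ => sq_nonneg _)
          (Finset.mem_univ i₀)) hc
    _ ≤ ∑ i, (X *ᵥ (b - a)) i ^ 2 := hmineig _ hsupp
    _ = ∑ i, ((1 - P) *ᵥ (X *ᵥ b)) i ^ 2 := by rw [hres]

lemma mul_sum_sq_row_le_frobSq_one_sub_mul (hc : 0 ≤ c)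
    (hmineig : ∀ b : Fin p → ℝ, (∀ i ∉ S, b i = 0) → c * ∑ i, b i ^ 2 ≤ ∑ i, (X *ᵥ b) i ^ 2)
    (hS' : S' ⊆ S) (hPr : LinearMap.range P.mulVecLin = colSpan X S')
    {B : Matrix (Fin p) (Fin L) ℝ} (hB : ∀ i ∉ S, ∀ j, B i j = 0) {i₀ : Fin p} (hi₀ : i₀ ∉ S') :
    c * ∑ j, B i₀ j ^ 2 ≤ frobSq ((1 - P) * (X * B)) := by
  rw [frobSq, Finset.sum_comm, Finset.mul_sum]
  exact Finset.sum_le_sum fun j _ =>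
    mul_sq_le_sum_sq_one_sub_mulVec hc hmineig hS' hPr (b := Bᵀ j) (fun i hi => hB i hi j) hi₀

lemma minRowNorm_le {B : Matrix (Fin p) (Fin L) ℝ} {i : Fin p} (hi : i ∈ S) :
    minRowNorm B S ≤ Real.sqrt (∑ j, B i j ^ 2) :=
  csInf_le ((S.finite_toSet.image _).bddBelow) ⟨i, hi, rfl⟩

lemma sqrt_mul_minRowNorm_le_frob_one_sub_mul (hc : 0 ≤ c)
    (hmineig : ∀ b : Fin p → ℝ, (∀ i ∉ S, b i = 0) → c * ∑ i, b i ^ 2 ≤ ∑ i, (X *ᵥ b) i ^ 2)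
    (hsub : S' ⊂ S) (hPr : LinearMap.range P.mulVecLin = colSpan X S')
    {B : Matrix (Fin p) (Fin L) ℝ} (hB : ∀ i ∉ S, ∀ j, B i j = 0) :
    Real.sqrt c * minRowNorm B S ≤ frob ((1 - P) * (X * B)) := by
  obtain ⟨i₀, hi₀S, hi₀S'⟩ := Finset.exists_of_ssubset hsub
  calc Real.sqrt c * minRowNorm B S ≤ Real.sqrt c * Real.sqrt (∑ j, B i₀ j ^ 2) :=
        mul_le_mul_of_nonneg_left (minRowNorm_le hi₀S) (Real.sqrt_nonneg c)
    _ = Real.sqrt (c * ∑ j, B i₀ j ^ 2) := (Real.sqrt_mul hc _).symm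
    _ ≤ frob ((1 - P) * (X * B)) := Real.sqrt_le_sqrt
        (mul_sum_sq_row_le_frobSq_one_sub_mul hc hmineig hsub.subset hPr hB hi₀S')

end Denominator

lemma div_lt_of_le_of_sub_le {a b w m Γ : ℝ} (hΓ : 0 < Γ) (ha : 0 ≤ a) (haw : a ≤ w)
    (hb : m - w ≤ b) (hw : w < Γ / (1 + Γ) * m) : a / b < Γ := by
  have hwΓ : w < Γ * (m - w) := by
    rw [div_mul_eq_mul_div, lt_div_iff₀ (by linarith)] at hw
    linarith
  have hb : w < Γ * b := hwΓ.trans_le (mul_le_mul_of_nonneg_left hb hΓ.le)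
  rw [div_lt_iff₀ (pos_of_mul_pos_right (ha.trans_lt (haw.trans_lt hb)) hΓ.le)]
  linarith

/-- if `Y = XB + W` with `B` row-supported on `S`, the minimum eigenvalue of
`X[:,S]ᵀX[:,S]` is at least `c > 0`, `S' ⊊ S`, and for some `Γ > 0` the noise satisfies
`‖W‖_F < (Γ/(1+Γ))·√c·B_min`, then `‖(Iₙ−P(S))Y‖_F / ‖(Iₙ−P(S'))Y‖_F < Γ`. -/
theorem residual_ratio_below_threshold
    {n p L : ℕ} (X : Matrix (Fin n) (Fin p) ℝ)
    (S : Finset (Fin p)) (B : Matrix (Fin p) (Fin L) ℝ)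
    (hBsupp : ∀ i ∉ S, ∀ j, B i j = 0)
    (W Y : Matrix (Fin n) (Fin L) ℝ) (hY : Y = X * B + W)
    (c : ℝ) (hc : 0 < c)
    (hmineig : ∀ b : Fin p → ℝ, (∀ i ∉ S, b i = 0) →
      c * ∑ i, b i ^ 2 ≤ ∑ i, (X.mulVec b i) ^ 2)
    (S' : Finset (Fin p)) (hsub : S' ⊂ S)
    (Γ : ℝ) (hΓ : 0 < Γ)
    (hW : frob W < (Γ / (1 + Γ)) * (Real.sqrt c * minRowNorm B S))
    (PS PS' : Matrix (Fin n) (Fin n) ℝ)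
    (hPS : IsOrthProjOnto PS (colSpan X S)) (hPS' : IsOrthProjOnto PS' (colSpan X S')) :
    frob ((1 - PS) * Y) / frob ((1 - PS') * Y) < Γ := by
  obtain ⟨hPS2, hPSt, hPSr⟩ := hPS
  obtain ⟨hPS'2, hPS't, hPS'r⟩ := hPS'
  have hnum : frob ((1 - PS) * Y) ≤ frob W := by
    rw [hY, Matrix.mul_add, one_sub_mul_mul_eq_zero hPS2 hPSr hBsupp, zero_add]
    exact frob_one_sub_mul_le hPS2 hPSt W
  have hden : Real.sqrt c * minRowNorm B S - frob W ≤ frob ((1 - PS') * Y) :=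
    calc Real.sqrt c * minRowNorm B S - frob W
        ≤ frob ((1 - PS') * (X * B)) - frob ((1 - PS') * W) :=
          sub_le_sub (sqrt_mul_minRowNorm_le_frob_one_sub_mul hc.le hmineig hsub hPS'r hBsupp)
            (frob_one_sub_mul_le hPS'2 hPS't W)
      _ ≤ frob ((1 - PS') * Y) := by
          rw [hY, Matrix.mul_add]
          exact frob_sub_frob_le_frob_add _ _
  exact div_lt_of_le_of_sub_le hΓ (Real.sqrt_nonneg _) hnum hden hW
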